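/- arXiv:1807.01794 — 2 statements merged into one kernel-verified Lean document; each statement's English description precedes it below -/
import Mathlib

section
/- For all integers k, l ≥ 1 with k + l + 1 ≤ n, the expectation of X(k,l) under G(n,1/2) equals E X(k,l) = (n! / (k! · l! · (n−k−l)!)) · (n−k−l) · 2^{−(k+l)²/2 + (k+l)/2} · 2^{−(k+l)} · (1 − 2^{−k})^{n−k−l−1} · (1 − 2^{−l})^{n−k−l−1}. -/
open Filter Real

/-- A "configuration" in a graph `G`: two disjoint nonempty cliques `X₁, X₂` with no
edges between them, together with a vertex `x` outside both that is adjacent to every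
vertex of `X₁ ∪ X₂`, such that every vertex outside `X₁ ∪ X₂` has a neighbor in `X₁`
and a neighbor in `X₂`. -/
def IsConfig {n : ℕ} (G : SimpleGraph (Fin n)) (X₁ X₂ : Finset (Fin n)) (x : Fin n) : Prop :=
  X₁.Nonempty ∧ X₂.Nonempty ∧ Disjoint X₁ X₂ ∧
  x ∉ X₁ ∧ x ∉ X₂ ∧
  (∀ u ∈ X₁, ∀ v ∈ X₁, u ≠ v → G.Adj u v) ∧
  (∀ u ∈ X₂, ∀ v ∈ X₂, u ≠ v → G.Adj u v) ∧
  (∀ u ∈ X₁, ∀ v ∈ X₂, ¬ G.Adj u v) ∧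
  (∀ u ∈ X₁, G.Adj x u) ∧ (∀ u ∈ X₂, G.Adj x u) ∧
  (∀ y : Fin n, y ∉ X₁ → y ∉ X₂ →
    (∃ u ∈ X₁, G.Adj y u) ∧ (∃ u ∈ X₂, G.Adj y u))

/-- Property `P` of a graph: existence of a configuration. -/
def PropertyP {n : ℕ} (G : SimpleGraph (Fin n)) : Prop :=
  ∃ (X₁ X₂ : Finset (Fin n)) (x : Fin n), IsConfig G X₁ X₂ x

/-- The probability, under the uniform distribution on graphs on `{1, …, n}`,
of the set of graphs satisfying `Q`. -/
noncomputable def unifProb (n : ℕ) (Q : SimpleGraph (Fin n) → Prop) : ℝ :=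
  (Nat.card {G : SimpleGraph (Fin n) // Q G} : ℝ) / 2 ^ (n.choose 2)

/-- `Xcount n k l G` is the number of ordered triples `(X₁, X₂, x)` forming a
configuration in `G` with `|X₁| = k` and `|X₂| = l`. -/
noncomputable def Xcount (n k l : ℕ) (G : SimpleGraph (Fin n)) : ℕ :=
  Nat.card {t : Finset (Fin n) × Finset (Fin n) × Fin n //
    t.1.card = k ∧ t.2.1.card = l ∧ IsConfig G t.1 t.2.1 t.2.2}

/-- The expectation of a random variable `Y` under the uniform distribution on graphs
on `{1, …, n}`. -/
noncomputable def expect (n : ℕ) (Y : SimpleGraph (Fin n) → ℝ) : ℝ :=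
  (∑ G : SimpleGraph (Fin n), Y G) / 2 ^ (n.choose 2)

/-!
Fix `X₁, X₂, x` with `|X₁| = k ≥ 1`, `|X₂| = l ≥ 1`, `X₁, X₂` disjoint and `x ∉ X₁ ∪ X₂`, and
put `C = X₁ ∪ X₂ ∪ {x}`. Being a configuration means two things: on `C` the graph is the
complement of the complete bipartite graph between `X₁` and `X₂` (the apex condition for `x`
then holds automatically, since `X₁` and `X₂` are nonempty), and every vertex `y ∉ C` has an
edge to `X₁` and an edge to `X₂`. These conditions concern pairwise disjoint sets of vertex
pairs, so under `G(n, 1/2)`, i.e. for a uniformly random predicate on pairs, they are independent,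
with probabilities `2^{-C(k+l+1, 2)}` and `(1 - 2^{-k})(1 - 2^{-l})` for each of the
`n - k - l - 1` vertices `y`. By linearity of expectation, `E X(k,l)` is this probability times
the number `C(n,k) C(n-k,l) (n-k-l)` of triples, and `2^{-s²/2 + s/2} 2^{-s} = 2^{-C(s+1, 2)}`.
-/

noncomputable def predProb (A : Type*) [Finite A] (P : (A → Prop) → Prop) : ℝ :=
  Nat.card {f : A → Prop // P f} / 2 ^ Nat.card A

section predProb

variable {A : Type*} [Finite A]

theorem predProb_forall_fiber {I : Type*} [Fintype I] (β : A → I)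
    (Q : ∀ i, ({a // β a = i} → Prop) → Prop) :
    predProb A (fun f => ∀ i, Q i (fun a => f a)) = ∏ i, predProb {a // β a = i} (Q i) := by
  have e : {f : A → Prop // ∀ i, Q i (fun a => f a)} ≃ ∀ i, {g // Q i g} :=
    (((Equiv.sigmaFiberEquiv β).symm.arrowCongr (Equiv.refl Prop)).trans
      (Equiv.piCurry fun i (_ : {a // β a = i}) => Prop)).subtypeEquiv
      (q := fun F => ∀ i, Q i (F i)) (fun _ => Iff.rfl) |>.trans Equiv.subtypePiEquivPi
  have hA : Nat.card A = ∑ i, Nat.card {a // β a = i} := by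
    rw [← Nat.card_congr (Equiv.sigmaFiberEquiv β), Nat.card_sigma]
  simp only [predProb, Nat.card_congr e, Nat.card_pi, hA, ← Finset.prod_pow_eq_pow_sum,
    Nat.cast_prod, Finset.prod_div_distrib]

theorem predProb_agreeOn (p v : A → Prop) :
    predProb A (fun g => ∀ a, p a → (g a ↔ v a)) = (2 ^ Nat.card {a // p a})⁻¹ := by
  classical
  have e : {g : A → Prop // ∀ a, p a → (g a ↔ v a)} ≃ ({a // ¬ p a} → Prop) :=
  { toFun := fun g a => g.1 a
    invFun := fun h => ⟨fun a => if hp : p a then v a else h ⟨a, hp⟩, fun a hp => by simp [hp]⟩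
    left_inv := fun g => by
      ext a
      by_cases hp : p a <;> simp [hp, g.2 a]
    right_inv := fun h => by
      ext a
      simp [a.2] }
  have hA : Nat.card A = Nat.card {a // p a} + Nat.card {a // ¬ p a} := by
    rw [← Nat.card_sum, Nat.card_congr (Equiv.sumCompl p)]
  have : (2 : ℝ) ^ Nat.card {a // ¬ p a} ≠ 0 := by positivity
  rw [predProb, Nat.card_congr e, Nat.card_fun, hA, pow_add]
  simp only [Nat.card_eq_fintype_card, Fintype.card_prop, Nat.cast_pow, Nat.cast_ofNat]
  field_simp

theorem predProb_exists : predProb A (fun g => ∃ a, g a) = 1 - (2 ^ Nat.card A)⁻¹ := by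
  classical
  have hnone : Nat.card {g : A → Prop // ¬ ∃ a, g a} = 1 := by
    rw [Nat.card_eq_one_iff_unique]
    refine ⟨⟨fun ⟨g, hg⟩ ⟨g', hg'⟩ => ?_⟩, ⟨⟨fun _ => False, by simp⟩⟩⟩
    simp only [not_exists] at hg hg'
    ext a
    simp [hg a, hg' a]
  have hsplit := Nat.card_congr (Equiv.sumCompl fun g : A → Prop => ∃ a, g a)
  rw [Nat.card_sum, hnone, Nat.card_fun] at hsplit
  have hcard : (Nat.card {g : A → Prop // ∃ a, g a} : ℝ) = 2 ^ Nat.card A - 1 := by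
    rw [eq_sub_iff_add_eq]
    exact_mod_cast hsplit.trans (by simp)
  rw [predProb, hcard]
  field_simp

end predProb

def SimpleGraph.equivPred (V : Type*) : SimpleGraph V ≃ ({e : Sym2 V // ¬ e.IsDiag} → Prop) where
  toFun G e := e.1 ∈ G.edgeSet
  invFun f := SimpleGraph.fromEdgeSet {e | ∃ h, f ⟨e, h⟩}
  left_inv G := by
    ext a b
    simp only [SimpleGraph.fromEdgeSet_adj, Set.mem_ofPred_eq, SimpleGraph.mem_edgeSet]
    exact ⟨fun h => h.1.2, fun h => ⟨⟨h.ne, h⟩, h.ne⟩⟩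
  right_inv f := by
    ext ⟨e, he⟩
    simp [he]

@[simp]
theorem SimpleGraph.equivPred_apply {V : Type*} (G : SimpleGraph V)
    (e : {e : Sym2 V // ¬ e.IsDiag}) : SimpleGraph.equivPred V G e = (e.1 ∈ G.edgeSet) := rfl

theorem unifProb_eq_predProb (n : ℕ) (Q : SimpleGraph (Fin n) → Prop) :
    unifProb n Q =
      predProb {e : Sym2 (Fin n) // ¬ e.IsDiag} (fun f => Q ((SimpleGraph.equivPred _).symm f)) := by
  rw [unifProb, predProb, Nat.card_congr ((SimpleGraph.equivPred _).subtypeEquiv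
      (q := fun f => Q ((SimpleGraph.equivPred _).symm f)) fun G => by rw [Equiv.symm_apply_apply]),
    Nat.card_eq_fintype_card (α := {e : Sym2 (Fin n) // _}), Sym2.card_subtype_not_diag,
    Fintype.card_fin]

theorem expect_natCard_eq_sum_unifProb {n : ℕ} {T : Type*} [Fintype T]
    (E : T → SimpleGraph (Fin n) → Prop) :
    expect n (fun G => (Nat.card {t // E t G} : ℝ)) = ∑ t, unifProb n (E t) := by
  classical
  simp only [expect, unifProb, ← Finset.sum_div, Nat.card_eq_fintype_card, Fintype.card_subtype,
    Finset.card_filter, Nat.cast_sum]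
  rw [Finset.sum_comm]

theorem SimpleGraph.forall_adj_iff_forall_edgeSet {V : Type*} (G H : SimpleGraph V)
    (p : V → Prop) :
    (∀ u, p u → ∀ v, p v → (G.Adj u v ↔ H.Adj u v)) ↔
      ∀ e : Sym2 V, (∀ z ∈ e, p z) → (e ∈ G.edgeSet ↔ e ∈ H.edgeSet) := by
  refine ⟨fun h e => ?_, fun h u hu v hv => h s(u, v) (by simp [hu, hv])⟩
  induction e using Sym2.ind with
  | _ u v => exact fun he => h u (he u (Sym2.mem_mk_left u v)) v (he v (Sym2.mem_mk_right u v))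

theorem Finset.natCard_offDiag_sym2 {V : Type*} [DecidableEq V] (s : Finset V) :
    Nat.card {e : Sym2 V // ¬ e.IsDiag ∧ ∀ z ∈ e, z ∈ s} = s.card.choose 2 := by
  rw [← Sym2.card_image_offDiag, ← Nat.card_eq_finsetCard, ← Sym2.filter_image_mk_not_isDiag,
    ← Finset.sym2_eq_image]
  exact Nat.card_congr <| Equiv.subtypeEquivRight fun e => by
    rw [Finset.mem_filter, Finset.mem_sym2_iff, and_comm]

namespace IsConfig

variable {n : ℕ} (X₁ X₂ : Finset (Fin n)) (x : Fin n)

abbrev core : Finset (Fin n) := insert x (X₁ ∪ X₂)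

def side (b : Bool) : Finset (Fin n) := bif b then X₁ else X₂

/-- `some (y, b)` for a pair joining a vertex `y ∉ core` to `side b`, `none` for all other
pairs. -/
def pairClass (u v : Fin n) : Option ({y // y ∉ core X₁ X₂ x} × Bool) :=
  if h : v ∉ core X₁ X₂ x ∧ u ∈ X₁ ∪ X₂ then some (⟨v, h.1⟩, decide (u ∈ X₁))
  else if h : u ∉ core X₁ X₂ x ∧ v ∈ X₁ ∪ X₂ then some (⟨u, h.1⟩, decide (v ∈ X₁))
  else none

theorem pairClass_comm (u v : Fin n) : pairClass X₁ X₂ x u v = pairClass X₁ X₂ x v u := by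
  unfold pairClass
  split_ifs <;> grind

def edgeClass : Sym2 (Fin n) → Option ({y // y ∉ core X₁ X₂ x} × Bool) :=
  Sym2.lift ⟨pairClass X₁ X₂ x, pairClass_comm X₁ X₂ x⟩

/-- The graph that a configuration induces on `core`: the complement of the complete bipartite
graph between `X₁` and `X₂`. -/
def patternGraph : SimpleGraph (Fin n) where
  Adj u v := u ≠ v ∧ ¬ (u ∈ X₁ ∧ v ∈ X₂) ∧ ¬ (u ∈ X₂ ∧ v ∈ X₁)
  symm := ⟨fun _ _ => by grind⟩
  loopless := ⟨fun _ h => h.1 rfl⟩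

/-- Being a configuration, split along the fibres of `edgeClass`. -/
def fiberEvent : ∀ i : Option ({y // y ∉ core X₁ X₂ x} × Bool),
    ({e : {e : Sym2 (Fin n) // ¬ e.IsDiag} // edgeClass X₁ X₂ x e = i} → Prop) → Prop
  | none => fun g => ∀ e, (∀ z ∈ e.1.1, z ∈ core X₁ X₂ x) →
      (g e ↔ e.1.1 ∈ (patternGraph X₁ X₂).edgeSet)
  | some _ => fun g => ∃ e, g e

variable {X₁ X₂ x}

@[simp]
theorem patternGraph_adj {u v : Fin n} : (patternGraph X₁ X₂).Adj u v ↔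
    u ≠ v ∧ ¬ (u ∈ X₁ ∧ v ∈ X₂) ∧ ¬ (u ∈ X₂ ∧ v ∈ X₁) := Iff.rfl

theorem notMem_side_of_notMem_core {y : Fin n} (hy : y ∉ core X₁ X₂ x) (b : Bool) :
    y ∉ side X₁ X₂ b := by
  cases b <;> simp_all [side]

theorem pairClass_eq_none {u v : Fin n} (hu : u ∈ core X₁ X₂ x) (hv : v ∈ core X₁ X₂ x) :
    pairClass X₁ X₂ x u v = none := by
  unfold pairClass
  split_ifs <;> simp_all

theorem edgeClass_eq_none {e : Sym2 (Fin n)} : (∀ z ∈ e, z ∈ core X₁ X₂ x) →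
    edgeClass X₁ X₂ x e = none := by
  induction e using Sym2.ind with
  | _ u v => exact fun he =>
    pairClass_eq_none (he u (Sym2.mem_mk_left u v)) (he v (Sym2.mem_mk_right u v))

theorem pairClass_eq_some_iff (hd : Disjoint X₁ X₂) {u v : Fin n} {y : {y // y ∉ core X₁ X₂ x}}
    {b : Bool} :
    pairClass X₁ X₂ x u v = some (y, b) ↔
      (u = y ∧ v ∈ side X₁ X₂ b) ∨ (v = y ∧ u ∈ side X₁ X₂ b) := by
  obtain ⟨y, hy⟩ := y
  unfold pairClass side
  have := Finset.disjoint_left.mp hd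
  split_ifs <;> cases b <;> simp_all <;> grind

noncomputable def fiberEquivSide (hd : Disjoint X₁ X₂) (y : {y // y ∉ core X₁ X₂ x}) (b : Bool) :
    {u // u ∈ side X₁ X₂ b} ≃
      {e : {e : Sym2 (Fin n) // ¬ e.IsDiag} // edgeClass X₁ X₂ x e = some (y, b)} :=
  Equiv.ofBijective
    (fun u => ⟨⟨s(y.1, u.1), by
        rw [Sym2.mk_isDiag_iff]; exact fun h => notMem_side_of_notMem_core y.2 b (h ▸ u.2)⟩,
      (pairClass_eq_some_iff hd).2 (.inl ⟨rfl, u.2⟩)⟩)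
    (by
      constructor
      · intro u v h
        exact Subtype.ext (Sym2.congr_right.1 (congrArg (·.1.1) h))
      · rintro ⟨⟨e, he⟩, hc⟩
        induction e using Sym2.ind with
        | _ u v =>
          rcases (pairClass_eq_some_iff hd).1 hc with ⟨rfl, hv⟩ | ⟨rfl, hu⟩
          · exact ⟨⟨v, hv⟩, rfl⟩
          · exact ⟨⟨u, hu⟩, by simp [Sym2.eq_swap]⟩)

@[simp]
theorem fiberEquivSide_apply (hd : Disjoint X₁ X₂) (y : {y // y ∉ core X₁ X₂ x}) (b : Bool)
    (u : {u // u ∈ side X₁ X₂ b}) : (fiberEquivSide hd y b u).1.1 = s(y.1, u.1) := rfl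

theorem isConfig_iff {G : SimpleGraph (Fin n)} (h₁ : X₁.Nonempty) (h₂ : X₂.Nonempty)
    (hd : Disjoint X₁ X₂) (hx : x ∉ X₁ ∪ X₂) :
    IsConfig G X₁ X₂ x ↔
      (∀ u ∈ core X₁ X₂ x, ∀ v ∈ core X₁ X₂ x, G.Adj u v ↔ (patternGraph X₁ X₂).Adj u v) ∧
      ∀ y ∉ core X₁ X₂ x, ∀ b, ∃ u ∈ side X₁ X₂ b, G.Adj y u := by
  have hd' := Finset.disjoint_left.mp hd
  simp only [Finset.mem_union, not_or] at hx
  simp only [IsConfig, patternGraph_adj, Bool.forall_bool, side, core, Finset.mem_insert,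
    Finset.mem_union]
  constructor
  · rintro ⟨-, -, -, -, -, hc₁, hc₂, hno, hx₁, hx₂, hout⟩
    refine ⟨?_, ?_⟩
    · rintro u (rfl | hu | hu) v (rfl | hv | hv)
      all_goals grind [G.adj_comm, G.loopless.irrefl]
    · grind
  · rintro ⟨hcore, hout⟩
    refine ⟨h₁, h₂, hd, hx.1, hx.2, ?_⟩
    grind

theorem isConfig_iff_forall_fiberEvent {G : SimpleGraph (Fin n)} (h₁ : X₁.Nonempty)
    (h₂ : X₂.Nonempty) (hd : Disjoint X₁ X₂) (hx : x ∉ X₁ ∪ X₂) :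
    IsConfig G X₁ X₂ x ↔ ∀ i, fiberEvent X₁ X₂ x i (fun e => SimpleGraph.equivPred _ G e) := by
  rw [isConfig_iff h₁ h₂ hd hx, Option.forall, Prod.forall]
  refine and_congr ?_ ?_
  · refine (SimpleGraph.forall_adj_iff_forall_edgeSet _ _ (· ∈ core X₁ X₂ x)).trans ?_
    refine ⟨fun h e he => h e.1.1 he, fun h e he => ?_⟩
    by_cases hnd : e.IsDiag
    · simp [hnd]
    · exact h ⟨⟨e, hnd⟩, edgeClass_eq_none he⟩ he
  · rw [Subtype.forall']
    refine forall_congr' fun y => forall_congr' fun b => ?_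
    simp only [fiberEvent]
    rw [← (fiberEquivSide hd y b).exists_congr_right]
    simp

theorem natCard_fiber_none_subset_core :
    Nat.card {e : {e : {e : Sym2 (Fin n) // ¬ e.IsDiag} // edgeClass X₁ X₂ x e = none} //
      ∀ z ∈ e.1.1, z ∈ core X₁ X₂ x} = (core X₁ X₂ x).card.choose 2 := by
  rw [← Finset.natCard_offDiag_sym2]
  exact Nat.card_congr <| (Equiv.subtypeSubtypeEquivSubtype edgeClass_eq_none).trans
    (Equiv.subtypeSubtypeEquivSubtypeInter (fun e : Sym2 (Fin n) => ¬ e.IsDiag)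
      (∀ z ∈ ·, z ∈ core X₁ X₂ x))

theorem unifProb_isConfig (h₁ : X₁.Nonempty) (h₂ : X₂.Nonempty) (hd : Disjoint X₁ X₂)
    (hx : x ∉ X₁ ∪ X₂) :
    unifProb n (fun G => IsConfig G X₁ X₂ x) =
      (2 ^ (core X₁ X₂ x).card.choose 2)⁻¹ *
        ((1 - (2 ^ X₁.card)⁻¹) * (1 - (2 ^ X₂.card)⁻¹)) ^ (core X₁ X₂ x)ᶜ.card := by
  simp only [unifProb_eq_predProb, isConfig_iff_forall_fiberEvent h₁ h₂ hd hx,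
    Equiv.apply_symm_apply]
  rw [predProb_forall_fiber (fun e : {e : Sym2 (Fin n) // ¬ e.IsDiag} => edgeClass X₁ X₂ x e)
    (fiberEvent X₁ X₂ x), Fintype.prod_option, Fintype.prod_prod_type]
  simp only [fiberEvent, predProb_agreeOn, predProb_exists, natCard_fiber_none_subset_core,
    ← Nat.card_congr (fiberEquivSide hd _ _), Nat.card_eq_finsetCard, Fintype.prod_bool, side,
    cond_true, cond_false, Finset.prod_const, Finset.card_univ]
  simp only [← Finset.mem_compl, Fintype.card_coe]

theorem unifProb_card_card_isConfig {k l : ℕ} (hk : 1 ≤ k) (hl : 1 ≤ l)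
    (X₁ X₂ : Finset (Fin n)) (x : Fin n) :
    unifProb n (fun G => X₁.card = k ∧ X₂.card = l ∧ IsConfig G X₁ X₂ x) =
      if X₁.card = k ∧ X₂.card = l ∧ Disjoint X₁ X₂ ∧ x ∉ X₁ ∪ X₂ then
        (2 ^ (k + l + 1).choose 2)⁻¹ * ((1 - (2 ^ k)⁻¹) * (1 - (2 ^ l)⁻¹)) ^ (n - (k + l + 1))
      else 0 := by
  split_ifs with h
  · obtain ⟨rfl, rfl, hd, hx⟩ := h
    have hcore : (core X₁ X₂ x).card = X₁.card + X₂.card + 1 := by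
      rw [Finset.card_insert_of_notMem hx, Finset.card_union_of_disjoint hd]
    simp only [true_and]
    rw [unifProb_isConfig (Finset.card_pos.1 hk) (Finset.card_pos.1 hl) hd hx, Finset.card_compl,
      hcore, Fintype.card_fin]
  · have : IsEmpty {G // X₁.card = k ∧ X₂.card = l ∧ IsConfig G X₁ X₂ x} :=
      ⟨fun ⟨_, hk, hl, hc⟩ => h ⟨hk, hl, hc.2.2.1, by simp [hc.2.2.2.1, hc.2.2.2.2.1]⟩⟩
    simp [unifProb]

end IsConfig

theorem card_disjoint_triples (V : Type*) [Fintype V] [DecidableEq V] (k l : ℕ) :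
    (Finset.univ.filter fun t : Finset V × Finset V × V =>
      t.1.card = k ∧ t.2.1.card = l ∧ Disjoint t.1 t.2.1 ∧ t.2.2 ∉ t.1 ∪ t.2.1).card =
      (Fintype.card V).choose k * (Fintype.card V - k).choose l * (Fintype.card V - k - l) := by
  set T := ((Finset.univ : Finset V).powersetCard k).sigma fun X₁ =>
    (X₁ᶜ.powersetCard l).sigma fun X₂ => (X₁ ∪ X₂)ᶜ
  have hT : T.card = (Fintype.card V).choose k * ((Fintype.card V - k).choose l *
      (Fintype.card V - k - l)) := by
    rw [Finset.card_sigma, Finset.sum_const_nat fun X₁ hX₁ => ?_, Finset.card_powersetCard,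
      Finset.card_univ]
    rw [Finset.mem_powersetCard] at hX₁
    rw [Finset.card_sigma, Finset.sum_const_nat fun X₂ hX₂ => ?_, Finset.card_powersetCard,
      Finset.card_compl, hX₁.2]
    rw [Finset.mem_powersetCard, Finset.subset_compl_iff_disjoint_left] at hX₂
    rw [Finset.card_compl, Finset.card_union_of_disjoint hX₂.1, hX₁.2, hX₂.2, Nat.sub_sub]
  rw [mul_assoc, ← hT]
  refine Finset.card_nbij' (fun t => ⟨t.1, t.2.1, t.2.2⟩) (fun s => (s.1, s.2.1, s.2.2)) ?_ ?_
    (fun _ _ => rfl) (fun _ _ => rfl)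
  all_goals
    rintro ⟨X₁, X₂, x⟩ h
    simp only [T, Finset.coe_filter, Finset.coe_sigma, Set.mem_ofPred_eq, Set.mem_sigma_iff,
      Finset.mem_univ, Finset.mem_coe, Finset.mem_powersetCard,
      Finset.subset_compl_iff_disjoint_left, Finset.mem_compl, Finset.mem_union,
      Finset.subset_univ, true_and] at h ⊢
    tauto

theorem choose_mul_choose_eq_factorial_div {n k l : ℕ} (h : k + l ≤ n) :
    (n.choose k * (n - k).choose l : ℝ) =
      n.factorial / (k.factorial * l.factorial * (n - k - l).factorial) := by
  rw [Nat.cast_choose ℝ (by omega : k ≤ n), Nat.cast_choose ℝ (by omega : l ≤ n - k)]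
  have := (n - k).factorial_pos
  field_simp

theorem two_rpow_neg_natCast (k : ℕ) : (2 : ℝ) ^ (-(k : ℝ)) = (2 ^ k)⁻¹ := by
  rw [Real.rpow_neg zero_le_two, Real.rpow_natCast]

theorem two_rpow_mul_two_rpow_eq_inv_choose (s : ℕ) :
    (2 : ℝ) ^ (-((s : ℝ) ^ 2) / 2 + (s : ℝ) / 2) * 2 ^ (-(s : ℝ)) = (2 ^ (s + 1).choose 2)⁻¹ := by
  rw [← two_rpow_neg_natCast, ← Real.rpow_add zero_lt_two, Nat.cast_choose_two]
  push_cast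
  ring_nf

/-- Exact formula for the expectation of `X(k,l)` under `G(n,1/2)`. -/
theorem expect_Xcount_eq (n k l : ℕ) (hk : 1 ≤ k) (hl : 1 ≤ l) (hn : k + l + 1 ≤ n) :
    expect n (fun G => (Xcount n k l G : ℝ)) =
      (Nat.factorial n : ℝ) / ((Nat.factorial k : ℝ) * (Nat.factorial l : ℝ) * (Nat.factorial (n - k - l) : ℝ)) * ((n - k - l : ℕ) : ℝ) *
        (2 : ℝ) ^ (-(((k : ℝ) + l) ^ 2) / 2 + ((k : ℝ) + l) / 2) *
        (2 : ℝ) ^ (-((k : ℝ) + l)) *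
        (1 - (2 : ℝ) ^ (-(k : ℝ))) ^ (n - k - l - 1) *
        (1 - (2 : ℝ) ^ (-(l : ℝ))) ^ (n - k - l - 1) := by
  unfold Xcount
  rw [expect_natCard_eq_sum_unifProb]
  simp only [IsConfig.unifProb_card_card_isConfig hk hl]
  rw [Finset.sum_ite, Finset.sum_const_zero, add_zero, Finset.sum_const, nsmul_eq_mul,
    card_disjoint_triples, Fintype.card_fin]
  have hpow := two_rpow_mul_two_rpow_eq_inv_choose (k + l)
  push_cast at hpow
  rw [two_rpow_neg_natCast k, two_rpow_neg_natCast l, show n - (k + l + 1) = n - k - l - 1 by omega,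
    Nat.cast_mul, Nat.cast_mul, choose_mul_choose_eq_factorial_div (by omega), mul_pow, ← hpow]
  ring
end

section
/- Let k ≥ 1 and 0 ≤ j₁, j₂ ≤ k be integers. Let A₁, A₂, B₁, B₂ be finite sets, each of cardinality k, with A₁ ∩ A₂ = ∅, B₁ ∩ B₂ = ∅, A₁ ∩ B₂ = ∅, A₂ ∩ B₁ = ∅, |A₁ ∩ B₁| = j₁ and |A₂ ∩ B₂| = j₂, and set U = A₁ ∪ A₂ ∪ B₁ ∪ B₂ and j = j₁ + j₂. Then the proportion of subsets S ⊆ U that intersect each of A₁, A₂, B₁, B₂ (i.e., the number of such S divided by 2^{|U|}) equals (1 − 2^{−j₁})(1 − 2^{−j₂}) + 2^{−j₁}(1 − 2^{−j₂})(1 − 2^{−(k−j₁)})² + 2^{−j₂}(1 − 2^{−j₁})(1 − 2^{−(k−j₂)})² + 2^{−j}(1 − 2^{−(k−j₁)})²(1 − 2^{−(k−j₂)})². -/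
/-!
Put `V₁ = A₁ ∪ B₁` and `V₂ = A₂ ∪ B₂`. The intersection pattern makes `V₁` and `V₂` disjoint,
and `S` meets all four sets iff `S ∩ V₁` meets `A₁` and `B₁` and `S ∩ V₂` meets `A₂` and `B₂`.
Since `S ↦ (S ∩ V₁, S ∩ V₂)` is a bijection from subsets of `V₁ ∪ V₂` onto pairs of subsets,
the proportion is the product of the two proportions for a single pair. For a pair `A, B`,
inclusion–exclusion over the subsets missing `A` (those of `B \ A`) or missing `B` (those of
`A \ B`), which share only `∅`, counts `2^|A ∪ B| - 2^|B \ A| - 2^|A \ B| + 1` subsets meeting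
both; with `|A ∩ B| = j` and `|A \ B| = |B \ A| = k - j` this is
`(1 - 2^{-j}) + 2^{-j} (1 - 2^{-(k-j)})²` of all subsets, and expanding the product of the two
factors gives the four terms.
-/

open Finset

namespace Finset

variable {α : Type*}

noncomputable def subsetDensity (V : Finset α) (P : Finset α → Prop) [DecidablePred P] : ℝ :=
  #(V.powerset.filter P) / 2 ^ #V

theorem natCard_subsets_div_eq_subsetDensity (V : Finset α) (P : Finset α → Prop)
    [DecidablePred P] :
    (Nat.card {S : Finset α // S ⊆ V ∧ P S} : ℝ) / 2 ^ #V = subsetDensity V P := by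
  simp_rw [subsetDensity, ← mem_powerset, ← mem_filter]
  rw [Nat.card_eq_finsetCard]

variable [DecidableEq α]

theorem card_powerset_filter_union_of_disjoint {V₁ V₂ : Finset α} (h : Disjoint V₁ V₂)
    (P Q : Finset α → Prop) [DecidablePred P] [DecidablePred Q] :
    #((V₁ ∪ V₂).powerset.filter fun S => P (S ∩ V₁) ∧ Q (S ∩ V₂))
      = #(V₁.powerset.filter P) * #(V₂.powerset.filter Q) := by
  have inter_left {S₁ S₂ : Finset α} (h₁ : S₁ ⊆ V₁) (h₂ : S₂ ⊆ V₂) : (S₁ ∪ S₂) ∩ V₁ = S₁ := by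
    rw [union_inter_distrib_right, inter_eq_left.2 h₁,
      disjoint_iff_inter_eq_empty.1 (h.symm.mono_left h₂), union_empty]
  have inter_right {S₁ S₂ : Finset α} (h₁ : S₁ ⊆ V₁) (h₂ : S₂ ⊆ V₂) : (S₁ ∪ S₂) ∩ V₂ = S₂ := by
    rw [union_inter_distrib_right, inter_eq_left.2 h₂,
      disjoint_iff_inter_eq_empty.1 (h.mono_left h₁), empty_union]
  rw [← card_product]
  refine card_nbij' (fun S => (S ∩ V₁, S ∩ V₂)) (fun p => p.1 ∪ p.2) ?_ ?_ ?_ ?_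
  · intro S hS
    simp only [coe_filter, mem_powerset, Set.mem_ofPred_eq, coe_product, Set.mem_prod] at hS ⊢
    exact ⟨⟨inter_subset_right, hS.2.1⟩, inter_subset_right, hS.2.2⟩
  · rintro ⟨S₁, S₂⟩ hp
    simp only [coe_filter, mem_powerset, Set.mem_ofPred_eq, coe_product, Set.mem_prod] at hp ⊢
    obtain ⟨⟨h₁, hP⟩, h₂, hQ⟩ := hp
    rw [inter_left h₁ h₂, inter_right h₁ h₂]
    exact ⟨union_subset_union h₁ h₂, hP, hQ⟩
  · intro S hS
    simp only [coe_filter, mem_powerset, Set.mem_ofPred_eq] at hS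
    exact (inter_union_distrib_left S V₁ V₂).symm.trans (inter_eq_left.2 hS.1)
  · rintro ⟨S₁, S₂⟩ hp
    simp only [coe_product, coe_filter, mem_powerset, Set.mem_prod, Set.mem_ofPred_eq] at hp
    simp only [inter_left hp.1.1 hp.2.1, inter_right hp.1.1 hp.2.1]

theorem subsetDensity_union_of_disjoint {V₁ V₂ : Finset α} (h : Disjoint V₁ V₂)
    (P Q : Finset α → Prop) [DecidablePred P] [DecidablePred Q] :
    subsetDensity (V₁ ∪ V₂) (fun S => P (S ∩ V₁) ∧ Q (S ∩ V₂))
      = subsetDensity V₁ P * subsetDensity V₂ Q := by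
  rw [subsetDensity, subsetDensity, subsetDensity, card_powerset_filter_union_of_disjoint h,
    card_union_of_disjoint h, Nat.cast_mul, pow_add, mul_div_mul_comm]

theorem powerset_filter_not_meets_both (A B : Finset α) :
    (A ∪ B).powerset.filter (fun S => ¬((S ∩ A).Nonempty ∧ (S ∩ B).Nonempty))
      = (B \ A).powerset ∪ (A \ B).powerset := by
  ext S
  simp only [mem_filter, mem_powerset, mem_union, subset_sdiff, not_and_or,
    not_nonempty_iff_eq_empty, ← disjoint_iff_inter_eq_empty]
  constructor
  · rintro ⟨hS, hA | hB⟩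
    · exact .inl ⟨hA.left_le_of_le_sup_left hS, hA⟩
    · exact .inr ⟨hB.left_le_of_le_sup_right hS, hB⟩
  · rintro (⟨hB, hA⟩ | ⟨hA, hB⟩)
    · exact ⟨hB.trans subset_union_right, .inl hA⟩
    · exact ⟨hA.trans subset_union_left, .inr hB⟩

theorem powerset_sdiff_inter_powerset_sdiff (A B : Finset α) :
    (B \ A).powerset ∩ (A \ B).powerset = {∅} := by
  ext S
  simp only [mem_inter, mem_powerset, mem_singleton, ← subset_inter_iff]
  rw [disjoint_iff_inter_eq_empty.1 disjoint_sdiff_sdiff, subset_empty]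

theorem card_powerset_filter_meets_both_add (A B : Finset α) :
    #((A ∪ B).powerset.filter fun S => (S ∩ A).Nonempty ∧ (S ∩ B).Nonempty)
      + (2 ^ #(B \ A) + 2 ^ #(A \ B)) = 2 ^ #(A ∪ B) + 1 := by
  have hmiss := card_union_add_card_inter (B \ A).powerset (A \ B).powerset
  rw [powerset_sdiff_inter_powerset_sdiff, ← powerset_filter_not_meets_both,
    card_powerset, card_powerset, card_singleton] at hmiss
  rw [← hmiss, ← add_assoc, card_filter_add_card_filter_not, card_powerset]

theorem subsetDensity_meets_both (A B : Finset α) :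
    subsetDensity (A ∪ B) (fun S => (S ∩ A).Nonempty ∧ (S ∩ B).Nonempty)
      = (1 - 2⁻¹ ^ #(A ∩ B)) + 2⁻¹ ^ #(A ∩ B) * (1 - 2⁻¹ ^ #(A \ B)) * (1 - 2⁻¹ ^ #(B \ A)) := by
  have hcount := card_powerset_filter_meets_both_add A B
  have hunion : #(A ∪ B) = #(A \ B) + #(B \ A) + #(A ∩ B) := by
    rw [← card_sdiff_add_card, ← card_sdiff_add_card_inter B A, inter_comm, add_assoc]
  rw [subsetDensity, eq_comm, eq_div_iff (by positivity), hunion]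
  rw [hunion] at hcount
  have hcount' := congrArg (Nat.cast (R := ℝ)) hcount
  push_cast at hcount'
  simp only [inv_pow, pow_add] at hcount' ⊢
  field_simp
  linear_combination -hcount'

end Finset

theorem subset_hitting_proportion_general {α : Type*} [DecidableEq α]
    (k j₁ j₂ : ℕ) (hj₁ : j₁ ≤ k) (hj₂ : j₂ ≤ k)
    (A₁ A₂ B₁ B₂ : Finset α)
    (hA₁ : A₁.card = k) (hA₂ : A₂.card = k) (hB₁ : B₁.card = k) (hB₂ : B₂.card = k)
    (hA₁A₂ : A₁ ∩ A₂ = ∅) (hB₁B₂ : B₁ ∩ B₂ = ∅)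
    (hA₁B₂ : A₁ ∩ B₂ = ∅) (hA₂B₁ : A₂ ∩ B₁ = ∅)
    (hA₁B₁ : (A₁ ∩ B₁).card = j₁) (hA₂B₂ : (A₂ ∩ B₂).card = j₂) :
    (Nat.card {S : Finset α // S ⊆ A₁ ∪ A₂ ∪ B₁ ∪ B₂ ∧
        (S ∩ A₁).Nonempty ∧ (S ∩ A₂).Nonempty ∧ (S ∩ B₁).Nonempty ∧ (S ∩ B₂).Nonempty} : ℝ)
      / 2 ^ (A₁ ∪ A₂ ∪ B₁ ∪ B₂).card =
      (1 - (2:ℝ) ^ (-(j₁:ℝ))) * (1 - (2:ℝ) ^ (-(j₂:ℝ)))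
      + (2:ℝ) ^ (-(j₁:ℝ)) * (1 - (2:ℝ) ^ (-(j₂:ℝ))) * (1 - (2:ℝ) ^ (-((k:ℝ) - j₁))) ^ 2
      + (2:ℝ) ^ (-(j₂:ℝ)) * (1 - (2:ℝ) ^ (-(j₁:ℝ))) * (1 - (2:ℝ) ^ (-((k:ℝ) - j₂))) ^ 2
      + (2:ℝ) ^ (-((j₁:ℝ) + j₂)) * (1 - (2:ℝ) ^ (-((k:ℝ) - j₁))) ^ 2
          * (1 - (2:ℝ) ^ (-((k:ℝ) - j₂))) ^ 2 := by
  have hdisj : Disjoint (A₁ ∪ B₁) (A₂ ∪ B₂) := by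
    rw [← disjoint_iff_inter_eq_empty] at hA₁A₂ hB₁B₂ hA₁B₂ hA₂B₁
    exact (hA₁A₂.sup_right hA₁B₂).sup_left (hA₂B₁.symm.sup_right hB₁B₂)
  have hU : A₁ ∪ A₂ ∪ B₁ ∪ B₂ = (A₁ ∪ B₁) ∪ (A₂ ∪ B₂) := by ac_rfl
  have hsplit : subsetDensity (A₁ ∪ A₂ ∪ B₁ ∪ B₂) (fun S => (S ∩ A₁).Nonempty ∧
        (S ∩ A₂).Nonempty ∧ (S ∩ B₁).Nonempty ∧ (S ∩ B₂).Nonempty)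
      = subsetDensity (A₁ ∪ B₁) (fun T => (T ∩ A₁).Nonempty ∧ (T ∩ B₁).Nonempty)
        * subsetDensity (A₂ ∪ B₂) (fun T => (T ∩ A₂).Nonempty ∧ (T ∩ B₂).Nonempty) := by
    rw [hU, ← subsetDensity_union_of_disjoint hdisj]
    congr! 2 with S
    simp only [inter_assoc, inter_eq_right.2 subset_union_left,
      inter_eq_right.2 subset_union_right]
    tauto
  rw [natCard_subsets_div_eq_subsetDensity, hsplit, subsetDensity_meets_both,
    subsetDensity_meets_both]
  simp only [card_sdiff, inter_comm B₁ A₁, inter_comm B₂ A₂, hA₁, hA₂, hB₁, hB₂, hA₁B₁, hA₂B₂]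
  rw [← Nat.cast_sub hj₁, ← Nat.cast_sub hj₂, ← Nat.cast_add]
  simp only [Real.rpow_neg_natCast, zpow_neg, zpow_natCast, inv_pow, pow_add]
  ring

/-- Let `A₁, A₂, B₁, B₂` be `k`-element sets with the intersection
pattern `A₁ ∩ A₂ = ∅`, `B₁ ∩ B₂ = ∅`, `A₁ ∩ B₂ = ∅`, `A₂ ∩ B₁ = ∅`, `|A₁ ∩ B₁| = j₁`,
`|A₂ ∩ B₂| = j₂`, and let `U = A₁ ∪ A₂ ∪ B₁ ∪ B₂`, `j = j₁ + j₂`. Then the proportion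
of subsets `S ⊆ U` intersecting each of `A₁, A₂, B₁, B₂` equals
`(1 − 2^{−j₁})(1 − 2^{−j₂}) + 2^{−j₁}(1 − 2^{−j₂})(1 − 2^{−(k−j₁)})²
 + 2^{−j₂}(1 − 2^{−j₁})(1 − 2^{−(k−j₂)})² + 2^{−j}(1 − 2^{−(k−j₁)})²(1 − 2^{−(k−j₂)})²`. -/
theorem subset_hitting_proportion {α : Type*} [DecidableEq α]
    (k j₁ j₂ : ℕ) (hk : 1 ≤ k) (hj₁ : j₁ ≤ k) (hj₂ : j₂ ≤ k)
    (A₁ A₂ B₁ B₂ : Finset α)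
    (hA₁ : A₁.card = k) (hA₂ : A₂.card = k) (hB₁ : B₁.card = k) (hB₂ : B₂.card = k)
    (hA₁A₂ : A₁ ∩ A₂ = ∅) (hB₁B₂ : B₁ ∩ B₂ = ∅)
    (hA₁B₂ : A₁ ∩ B₂ = ∅) (hA₂B₁ : A₂ ∩ B₁ = ∅)
    (hA₁B₁ : (A₁ ∩ B₁).card = j₁) (hA₂B₂ : (A₂ ∩ B₂).card = j₂) :
    (Nat.card {S : Finset α // S ⊆ A₁ ∪ A₂ ∪ B₁ ∪ B₂ ∧
        (S ∩ A₁).Nonempty ∧ (S ∩ A₂).Nonempty ∧ (S ∩ B₁).Nonempty ∧ (S ∩ B₂).Nonempty} : ℝ)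
      / 2 ^ (A₁ ∪ A₂ ∪ B₁ ∪ B₂).card =
      (1 - (2:ℝ) ^ (-(j₁:ℝ))) * (1 - (2:ℝ) ^ (-(j₂:ℝ)))
      + (2:ℝ) ^ (-(j₁:ℝ)) * (1 - (2:ℝ) ^ (-(j₂:ℝ))) * (1 - (2:ℝ) ^ (-((k:ℝ) - j₁))) ^ 2
      + (2:ℝ) ^ (-(j₂:ℝ)) * (1 - (2:ℝ) ^ (-(j₁:ℝ))) * (1 - (2:ℝ) ^ (-((k:ℝ) - j₂))) ^ 2
      + (2:ℝ) ^ (-((j₁:ℝ) + j₂)) * (1 - (2:ℝ) ^ (-((k:ℝ) - j₁))) ^ 2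
          * (1 - (2:ℝ) ^ (-((k:ℝ) - j₂))) ^ 2 :=
  subset_hitting_proportion_general k j₁ j₂ hj₁ hj₂ A₁ A₂ B₁ B₂ hA₁ hA₂ hB₁ hB₂ hA₁A₂ hB₁B₂ hA₁B₂
    hA₂B₁ hA₁B₁ hA₂B₂
end
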